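/- Let C be a counter machine and ℂ the Σ_C-Nmatrix induced by C. Then C halts when all counters are initially set to zero (i.e. comp(C, 0⃗) is finite) if and only if Thm(Σ_C, ⊢_ℂ) ≠ ∅. -/

import Mathlib

/-!
If `C` halts, the formula `seqFm` of its run is a theorem: under any valuation the values of the
numerals `enc C a` form an abstraction `f : ℕ → CMNum` (compatible with `zero` and `succ`), and
along the run every machine step is a legal `step` of the Nmatrix, so the formula of the run up to
`(q, a)` evaluates to `conf q (f ∘ a)`; at the halting state this is designated.

Conversely, every abstraction `f` yields a valuation reading numerals through `f`, and a theorem is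
designated under all of them. The exact abstraction `exactAbs` (`0 ↦ r=0, 1 ↦ r≥1, _ ↦ r≥2`)
decides zero tests and forces the initial counters to vanish, while the cuts `cutAbs m`
(`≤ m ↦ r≥0, m + 1 ↦ r≥1, _ ↦ r≥2`) jointly determine every number and the successor relation.
So the numerals inside a theorem are the true counter values and its nested `step`s are genuine
machine steps ending in a halting state.
-/


structure Signature where
  Conn : Type
  arity : Conn → ℕ

inductive Fm (S : Signature) : Type where
  | var : ℕ → Fm S
  | app : (c : S.Conn) → (Fin (S.arity c) → Fm S) → Fm S

def Fm.subst {S : Signature} (σ : ℕ → Fm S) : Fm S → Fm S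
  | .var i => σ i
  | .app c args => .app c (fun j => (args j).subst σ)

def Fm.varsLT {S : Signature} (n : ℕ) : Fm S → Prop
  | .var i => i < n
  | .app _ args => ∀ j, (args j).varsLT n

structure NMatrix (S : Signature) (V : Type) where
  D : Set V
  interp : (c : S.Conn) → (Fin (S.arity c) → V) → Set V
  interp_nonempty : ∀ c args, (interp c args).Nonempty

def IsVal {S : Signature} {V : Type} (M : NMatrix S V) (v : Fm S → V) : Prop :=
  ∀ (c : S.Conn) (args : Fin (S.arity c) → Fm S),
    v (Fm.app c args) ∈ M.interp c (fun i => v (args i))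

def Entails {S : Signature} {V : Type} (M : NMatrix S V) (Γ : Set (Fm S)) (A : Fm S) : Prop :=
  ∀ v, IsVal M v → (∀ B ∈ Γ, v B ∈ M.D) → v A ∈ M.D

def Interderiv {S : Signature} {V : Type} (M : NMatrix S V) (A B : Fm S) : Prop :=
  Entails M {A} B ∧ Entails M {B} A

def Deterministic {S : Signature} {V : Type} (M : NMatrix S V) : Prop :=
  ∀ c args, ∃ x, M.interp c args = {x}

inductive CMNum : Type where
  | r0 | ge0 | ge1 | ge2
deriving DecidableEq

inductive CMInstr (n : ℕ) (Q : Type) : Type where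
  | inc : Fin n → Q → CMInstr n Q
  | dec : Fin n → Q → Q → CMInstr n Q

structure CounterMachine where
  n : ℕ
  Q : Type
  finQ : Finite Q
  qinit : Q
  δ : Q → Option (CMInstr n Q)

inductive CMVal (C : CounterMachine) : Type where
  | num : CMNum → CMVal C
  | conf : C.Q → (Fin C.n → CMNum) → CMVal C
  | init : CMVal C
  | error : CMVal C

inductive CMConn (C : CounterMachine) : Type where
  | zero : CMConn C
  | eps : CMConn C
  | succ : CMConn C
  | step : C.Q → CMConn C

def CMSig (C : CounterMachine) : Signature where
  Conn := CMConn C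
  arity := fun c => match c with
    | .zero => 0
    | .eps => 0
    | .succ => 1
    | .step _ => C.n + 1

/-- Interpretation of `succ` on abstract numbers. -/
def zeroNum : Set CMNum := {.r0, .ge0}

def succNum : CMNum → Set CMNum
  | .r0 => {.ge1}
  | .ge0 => {.ge0, .ge1}
  | .ge1 => {.ge2}
  | .ge2 => {.ge2}

/-- Interpretation of `succ` in the Nmatrix induced by `C`. -/
def succC (C : CounterMachine) : CMVal C → Set (CMVal C)
  | .num x => CMVal.num '' succNum x
  | _ => {.error}

/-- Interpretation of `zero` in the Nmatrix induced by `C`. -/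
def zeroC (C : CounterMachine) : Set (CMVal C) := {.num .r0, .num .ge0}

/-- The condition under which `step^q` applied to `x` and a tuple of numbers `zn`
produces the configuration value `conf q zn`. -/
def stepOK (C : CounterMachine) (q : C.Q) (x : CMVal C) (zn : Fin C.n → CMNum) : Prop :=
  (x = CMVal.init ∧ q = C.qinit ∧ ((∀ i, zn i = .r0) ∨ (∀ i, zn i = .ge0))) ∨
  (∃ (q' : C.Q) (yn : Fin C.n → CMNum), x = CMVal.conf q' yn ∧
    ((∃ i, C.δ q' = some (.inc i q) ∧ zn i ∈ succNum (yn i) ∧ ∀ l, l ≠ i → zn l = yn l) ∨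
     (∃ i s, C.δ q' = some (.dec i q s) ∧ yn i ∈ succNum (zn i) ∧ ∀ l, l ≠ i → zn l = yn l) ∨
     (∃ i s, C.δ q' = some (.dec i s q) ∧ yn i ∈ zeroNum ∧ zn = yn)))

/-- Interpretation of `step^q` in the Nmatrix induced by `C`. -/
def stepC (C : CounterMachine) (q : C.Q) (x : CMVal C) (z : Fin C.n → CMVal C) :
    Set (CMVal C) :=
  { w | (∃ zn : Fin C.n → CMNum, (∀ i, z i = .num (zn i)) ∧ stepOK C q x zn ∧
          w = .conf q zn) ∨
        (¬ (∃ zn : Fin C.n → CMNum, (∀ i, z i = .num (zn i)) ∧ stepOK C q x zn) ∧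
          w = .error) }

lemma succC_nonempty (C : CounterMachine) (x : CMVal C) : (succC C x).Nonempty := by
  cases x with
  | num y =>
      cases y
      · exact ⟨.num .ge1, by simp [succC, succNum]⟩
      · exact ⟨.num .ge0, by simp [succC, succNum]⟩
      · exact ⟨.num .ge2, by simp [succC, succNum]⟩
      · exact ⟨.num .ge2, by simp [succC, succNum]⟩
  | conf q r => exact ⟨.error, rfl⟩
  | init => exact ⟨.error, rfl⟩
  | error => exact ⟨.error, rfl⟩

lemma stepC_nonempty (C : CounterMachine) (q : C.Q) (x : CMVal C)
    (z : Fin C.n → CMVal C) : (stepC C q x z).Nonempty := by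
  by_cases h : ∃ zn : Fin C.n → CMNum, (∀ i, z i = .num (zn i)) ∧ stepOK C q x zn
  · obtain ⟨zn, hz, hok⟩ := h
    exact ⟨.conf q zn, Or.inl ⟨zn, hz, hok, rfl⟩⟩
  · exact ⟨.error, Or.inr ⟨h, rfl⟩⟩

/-- The Nmatrix ℂ induced by the counter machine `C`. -/
def CMmatrix (C : CounterMachine) : NMatrix (CMSig C) (CMVal C) where
  D := { w | ∃ (q : C.Q) (r : Fin C.n → CMNum), w = CMVal.conf q r ∧ C.δ q = none }
  interp := fun c => match c with
    | .zero => fun _ => zeroC C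
    | .eps => fun _ => {CMVal.init}
    | .succ => fun args => succC C (args ⟨0, Nat.one_pos⟩)
    | .step q => fun args => stepC C q (args ⟨0, Nat.succ_pos _⟩) (fun i => args i.succ)
  interp_nonempty := by
    intro c args
    cases c with
    | zero => exact ⟨.num .r0, Or.inl rfl⟩
    | eps => exact ⟨.init, rfl⟩
    | succ => exact succC_nonempty C _
    | step q => exact stepC_nonempty C q _ _

/-- Encoding of natural numbers as closed formulas. -/
def enc (C : CounterMachine) : ℕ → Fm (CMSig C)
  | 0 => .app .zero (fun i => i.elim0)
  | a + 1 => .app .succ (fun _ => enc C a)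

/-- Configurations of a counter machine. -/
def Config (C : CounterMachine) : Type := C.Q × (Fin C.n → ℕ)

/-- One step of computation: `none` when the configuration is halting. -/
def nextConf (C : CounterMachine) (cfg : Config C) : Option (Config C) :=
  match C.δ cfg.1 with
  | none => none
  | some (.inc i q') => some (q', Function.update cfg.2 i (cfg.2 i + 1))
  | some (.dec i q' q'') =>
      if cfg.2 i = 0 then some (q'', cfg.2)
      else some (q', Function.update cfg.2 i (cfg.2 i - 1))

/-- The configuration reached after `k` steps starting from ⟨q_init, 0⃗⟩, or `none` if the
machine has already halted strictly before step `k`. -/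
def steps (C : CounterMachine) : ℕ → Option (Config C)
  | 0 => some (C.qinit, fun _ => 0)
  | k + 1 => (steps C k).bind (nextConf C)

/-- A configuration is halting when the transition function is undefined on its state. -/
def Halting (C : CounterMachine) (cfg : Config C) : Prop := C.δ cfg.1 = none

/-- Encoding of a reversed list of configurations as a formula (head = last configuration). -/
def seqRev (C : CounterMachine) : List (Config C) → Fm (CMSig C)
  | [] => .app .eps (fun i => i.elim0)
  | cfg :: rest =>
      .app (.step cfg.1) (Fin.cons (seqRev C rest) (fun i => enc C (cfg.2 i)))

/-- Encoding of a finite sequence of configurations as a formula. -/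
def seqFm (C : CounterMachine) (l : List (Config C)) : Fm (CMSig C) := seqRev C l.reverse

/-- The list of configurations ⟨C₀, …, C_k⟩ of the computation of `C` from all counters zero. -/
def compList (C : CounterMachine) (k : ℕ) : List (Config C) :=
  (List.range (k + 1)).filterMap (steps C)

lemma mem_zeroNum_iff {r : CMNum} : r ∈ zeroNum ↔ r = .r0 ∨ r = .ge0 := Iff.rfl

lemma r0_notMem_succNum (r : CMNum) : CMNum.r0 ∉ succNum r := by
  cases r <;> simp [succNum]

lemma ge0_mem_succNum_iff {r : CMNum} : CMNum.ge0 ∈ succNum r ↔ r = .ge0 := by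
  cases r <;> simp [succNum]

lemma ge1_mem_succNum_iff {r : CMNum} : CMNum.ge1 ∈ succNum r ↔ r ∈ zeroNum := by
  cases r <;> simp [succNum, zeroNum]

namespace CMNum

def IsAbstraction (f : ℕ → CMNum) : Prop :=
  f 0 ∈ zeroNum ∧ ∀ k, f (k + 1) ∈ succNum (f k)

def exactAbs : ℕ → CMNum
  | 0 => .r0
  | 1 => .ge1
  | _ + 2 => .ge2

def cutAbs (m h : ℕ) : CMNum :=
  if h ≤ m then .ge0 else if h = m + 1 then .ge1 else .ge2

lemma isAbstraction_exactAbs : IsAbstraction exactAbs := by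
  refine ⟨Or.inl rfl, fun k => ?_⟩
  rcases k with _ | _ | k <;> simp [exactAbs, succNum]

lemma isAbstraction_cutAbs (m : ℕ) : IsAbstraction (cutAbs m) := by
  refine ⟨by simp [cutAbs, zeroNum], fun k => ?_⟩
  simp only [cutAbs]
  split_ifs <;> first | omega | simp [succNum]

lemma exactAbs_eq_r0_iff {h : ℕ} : exactAbs h = .r0 ↔ h = 0 := by
  rcases h with _ | _ | h <;> simp [exactAbs]

lemma exactAbs_ne_ge0 (h : ℕ) : exactAbs h ≠ .ge0 := by
  rcases h with _ | _ | h <;> simp [exactAbs]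

lemma exactAbs_mem_zeroNum_iff {h : ℕ} : exactAbs h ∈ zeroNum ↔ h = 0 := by
  simp [mem_zeroNum_iff, exactAbs_eq_r0_iff, exactAbs_ne_ge0]

lemma cutAbs_eq_ge0_iff {m h : ℕ} : cutAbs m h = .ge0 ↔ h ≤ m := by
  simp only [cutAbs]
  split_ifs <;> simp <;> omega

lemma cutAbs_mem_zeroNum_iff {m h : ℕ} : cutAbs m h ∈ zeroNum ↔ h ≤ m := by
  rw [← cutAbs_eq_ge0_iff, mem_zeroNum_iff, or_iff_right]
  simp only [cutAbs]
  split_ifs <;> simp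

lemma eq_of_forall_cutAbs_eq {a b : ℕ} (h : ∀ m, cutAbs m a = cutAbs m b) : a = b :=
  le_antisymm (cutAbs_eq_ge0_iff.1 (h b ▸ cutAbs_eq_ge0_iff.2 le_rfl))
    (cutAbs_eq_ge0_iff.1 ((h a).symm ▸ cutAbs_eq_ge0_iff.2 le_rfl))

/-- The cut at `a - 1` shows `b < a`, and then the cut at `b` shows `a = b + 1`. -/
lemma eq_succ_of_forall_cutAbs {a b : ℕ} (ha : a ≠ 0)
    (h : ∀ m < a, cutAbs m a ∈ succNum (cutAbs m b)) : a = b + 1 := by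
  have hba : b < a := by
    have := h (a - 1) (by omega)
    rw [show cutAbs (a - 1) a = .ge1 by simp only [cutAbs]; split_ifs <;> first | rfl | omega,
      ge1_mem_succNum_iff, cutAbs_mem_zeroNum_iff] at this
    omega
  have := h b hba
  rw [show cutAbs b b = .ge0 from cutAbs_eq_ge0_iff.2 le_rfl] at this
  simp only [cutAbs, succNum] at this
  split_ifs at this <;> simp at this <;> omega

end CMNum

namespace CounterMachine

open CMNum

variable {C : CounterMachine}

section stepOK

variable {q q' : C.Q} {yn zn : Fin C.n → CMNum}

lemma stepOK_init_iff :
    stepOK C q .init zn ↔ q = C.qinit ∧ ((∀ i, zn i = .r0) ∨ (∀ i, zn i = .ge0)) := by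
  simp [stepOK]

lemma not_stepOK_conf_of_halting (hδ : C.δ q' = none) : ¬ stepOK C q (.conf q' yn) zn := by
  simp [stepOK, hδ]

lemma stepOK_conf_inc_iff {i : Fin C.n} {q₂ : C.Q} (hδ : C.δ q' = some (.inc i q₂)) :
    stepOK C q (.conf q' yn) zn ↔ q = q₂ ∧ zn i ∈ succNum (yn i) ∧ ∀ l, l ≠ i → zn l = yn l := by
  simp [stepOK, hδ, eq_comm]

lemma stepOK_conf_dec_iff {i : Fin C.n} {q₂ q₃ : C.Q} (hδ : C.δ q' = some (.dec i q₂ q₃)) :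
    stepOK C q (.conf q' yn) zn ↔
      (q = q₂ ∧ yn i ∈ succNum (zn i) ∧ ∀ l, l ≠ i → zn l = yn l) ∨
      (q = q₃ ∧ yn i ∈ zeroNum ∧ zn = yn) := by
  simp [stepOK, hδ, eq_comm]

end stepOK

lemma forall_stepOK_init_iff {q : C.Q} {h : Fin C.n → ℕ} :
    (∀ f, IsAbstraction f → stepOK C q .init (f ∘ h)) ↔ q = C.qinit ∧ h = 0 := by
  simp only [stepOK_init_iff, Function.comp_apply]
  constructor
  · intro H
    obtain ⟨hq, hr0 | hge0⟩ := H exactAbs isAbstraction_exactAbs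
    · exact ⟨hq, funext fun i => exactAbs_eq_r0_iff.1 (hr0 i)⟩
    · exact ⟨hq, funext fun i => absurd (hge0 i) (exactAbs_ne_ge0 _)⟩
  · rintro ⟨rfl, rfl⟩ f hf
    rcases hf.1 with h0 | h0
    · exact ⟨rfl, Or.inl fun _ => h0⟩
    · exact ⟨rfl, Or.inr fun _ => h0⟩

section nextConf

variable {q q' : C.Q} {a b : Fin C.n → ℕ} {i : Fin C.n} {q₂ q₃ : C.Q}

lemma nextConf_of_halting (hδ : C.δ q' = none) : nextConf C (q', a) = none := by
  simp [nextConf, hδ]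

lemma nextConf_of_inc (hδ : C.δ q' = some (.inc i q₂)) :
    nextConf C (q', a) = some (q₂, Function.update a i (a i + 1)) := by
  simp only [nextConf, hδ]; rfl

lemma nextConf_of_dec_of_eq_zero (hδ : C.δ q' = some (.dec i q₂ q₃)) (hz : a i = 0) :
    nextConf C (q', a) = some (q₃, a) := by
  simp only [nextConf, hδ, hz, if_true]; rfl

lemma nextConf_of_dec_of_ne_zero (hδ : C.δ q' = some (.dec i q₂ q₃)) (hz : a i ≠ 0) :
    nextConf C (q', a) = some (q₂, Function.update a i (a i - 1)) := by
  simp only [nextConf, hδ, hz, if_false]; rfl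

lemma stepOK_of_nextConf_eq_some {f : ℕ → CMNum} (hf : IsAbstraction f)
    (h : nextConf C (q', a) = some (q, b)) : stepOK C q (.conf q' (f ∘ a)) (f ∘ b) := by
  cases hδ : C.δ q' with
  | none => simp [nextConf_of_halting hδ] at h
  | some ins =>
    cases ins with
    | inc i q₂ =>
      rw [nextConf_of_inc hδ] at h
      cases h
      rw [stepOK_conf_inc_iff hδ]
      exact ⟨rfl, by simpa using hf.2 (a i), fun l hl => by simp [Function.update_of_ne hl]⟩
    | dec i q₂ q₃ =>
      rw [stepOK_conf_dec_iff hδ]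
      by_cases hz : a i = 0
      · rw [nextConf_of_dec_of_eq_zero hδ hz] at h
        cases h
        exact Or.inr ⟨rfl, by simpa [hz] using hf.1, rfl⟩
      · rw [nextConf_of_dec_of_ne_zero hδ hz] at h
        cases h
        refine Or.inl ⟨rfl, ?_, fun l hl => by simp [Function.update_of_ne hl]⟩
        simpa [Nat.sub_add_cancel (Nat.pos_of_ne_zero hz)] using hf.2 (a i - 1)

lemma nextConf_eq_some_of_inc_of_forall_stepOK (hδ : C.δ q' = some (.inc i q₂))
    (H : ∀ f, IsAbstraction f → stepOK C q (.conf q' (f ∘ a)) (f ∘ b)) :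
    nextConf C (q', a) = some (q, b) := by
  have H' f hf := (stepOK_conf_inc_iff hδ).1 (H f hf)
  obtain ⟨rfl, hexact, -⟩ := H' exactAbs isAbstraction_exactAbs
  have hbi : b i = a i + 1 := by
    refine eq_succ_of_forall_cutAbs (fun h0 => ?_) fun m _ => (H' _ (isAbstraction_cutAbs m)).2.1
    exact r0_notMem_succNum _ (by simpa [h0, exactAbs] using hexact)
  have hbl : ∀ l ≠ i, a l = b l := fun l hl =>
    (eq_of_forall_cutAbs_eq fun m => (H' _ (isAbstraction_cutAbs m)).2.2 l hl).symm
  rw [nextConf_of_inc hδ, Function.update_eq_iff.2 ⟨hbi.symm, hbl⟩]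

/-- The exact abstraction decides the zero test, and the cuts recover the counter values. -/
lemma nextConf_eq_some_of_dec_of_forall_stepOK (hδ : C.δ q' = some (.dec i q₂ q₃))
    (H : ∀ f, IsAbstraction f → stepOK C q (.conf q' (f ∘ a)) (f ∘ b)) :
    nextConf C (q', a) = some (q, b) := by
  have H' f hf := (stepOK_conf_dec_iff hδ).1 (H f hf)
  have hbl : ∀ l ≠ i, a l = b l := fun l hl => by
    refine (eq_of_forall_cutAbs_eq fun m => ?_).symm
    rcases H' _ (isAbstraction_cutAbs m) with ⟨-, -, h⟩ | ⟨-, -, h⟩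
    exacts [h l hl, congrFun h l]
  by_cases hz : a i = 0
  · obtain ⟨-, hsucc, -⟩ | ⟨rfl, -, -⟩ := H' exactAbs isAbstraction_exactAbs
    · exact absurd hsucc (by simp [hz, exactAbs, r0_notMem_succNum])
    have hbi : b i = 0 := by
      have : cutAbs 0 (b i) = .ge0 := by
        rcases H' _ (isAbstraction_cutAbs 0) with ⟨-, h, -⟩ | ⟨-, -, h⟩
        · simpa [hz, cutAbs, ge0_mem_succNum_iff] using h
        · simpa [hz, cutAbs] using congrFun h i
      simpa using cutAbs_eq_ge0_iff.1 this
    have hab : a = b := funext fun l => by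
      by_cases hl : l = i
      · rw [hl, hz, hbi]
      · exact hbl l hl
    rw [nextConf_of_dec_of_eq_zero hδ hz, hab]
  · obtain ⟨rfl, -, -⟩ | ⟨-, hzero, -⟩ := H' exactAbs isAbstraction_exactAbs
    · have hai : a i = b i + 1 := by
        refine eq_succ_of_forall_cutAbs hz fun m hm => ?_
        rcases H' _ (isAbstraction_cutAbs m) with ⟨-, h, -⟩ | ⟨-, h, -⟩
        · exact h
        · exact absurd (cutAbs_mem_zeroNum_iff.1 h) (by simpa using hm)
      rw [nextConf_of_dec_of_ne_zero hδ hz, Function.update_eq_iff.2 ⟨by omega, hbl⟩]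
    · exact absurd (exactAbs_mem_zeroNum_iff.1 hzero) hz

lemma nextConf_eq_some_of_forall_stepOK
    (H : ∀ f, IsAbstraction f → stepOK C q (.conf q' (f ∘ a)) (f ∘ b)) :
    nextConf C (q', a) = some (q, b) := by
  cases hδ : C.δ q' with
  | none => exact absurd (H exactAbs isAbstraction_exactAbs) (not_stepOK_conf_of_halting hδ)
  | some ins =>
    cases ins with
    | inc => exact nextConf_eq_some_of_inc_of_forall_stepOK hδ H
    | dec => exact nextConf_eq_some_of_dec_of_forall_stepOK hδ H

end nextConf

section stepC

variable {q : C.Q} {x : CMVal C} {z : Fin C.n → CMVal C}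

lemma eq_conf_of_mem_stepC {w : CMVal C} {zn : Fin C.n → CMNum} (hw : w ∈ stepC C q x z)
    (hz : ∀ i, z i = .num (zn i)) (hok : stepOK C q x zn) : w = .conf q zn := by
  rcases hw with ⟨zn', hz', -, rfl⟩ | ⟨hne, -⟩
  · congr
    funext i
    simpa [hz] using (hz' i).symm
  · exact absurd ⟨zn, hz, hok⟩ hne

lemma conf_mem_stepC_iff {q' : C.Q} {zn : Fin C.n → CMNum} :
    .conf q' zn ∈ stepC C q x z ↔ q' = q ∧ (∀ i, z i = .num (zn i)) ∧ stepOK C q x zn := by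
  constructor
  · rintro (⟨zn', hz', hok, hw⟩ | ⟨-, hw⟩)
    · cases hw
      exact ⟨rfl, hz', hok⟩
    · cases hw
  · rintro ⟨rfl, hz, hok⟩
    exact Or.inl ⟨zn, hz, hok, rfl⟩

lemma eq_error_or_conf_of_mem_stepC {w : CMVal C} (hw : w ∈ stepC C q x z) :
    w = .error ∨ ∃ zn, w = .conf q zn := by
  rcases hw with ⟨zn, -, -, rfl⟩ | ⟨-, rfl⟩
  exacts [Or.inr ⟨zn, rfl⟩, Or.inl rfl]

end stepC

@[simp]
lemma num_mem_zeroC_iff {r : CMNum} : CMVal.num r ∈ zeroC C ↔ r ∈ zeroNum := by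
  simp [zeroC, zeroNum]

@[simp]
lemma num_mem_succC_iff {r r' : CMNum} : CMVal.num r' ∈ succC C (.num r) ↔ r' ∈ succNum r := by
  simp [succC]

section Valuation

variable {v : Fm (CMSig C) → CMVal C}

lemma step_mem_of_isVal (hv : IsVal (CMmatrix C) v) (q : C.Q) (x : Fm (CMSig C))
    (t : Fin C.n → Fm (CMSig C)) :
    v (.app (.step q) (Fin.cons x t)) ∈ stepC C q (v x) (fun i => v (t i)) :=
  hv (.step q) (Fin.cons x t)

lemma exists_isAbstraction_of_isVal (hv : IsVal (CMmatrix C) v) :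
    ∃ f, IsAbstraction f ∧ ∀ a, v (enc C a) = .num (f a) := by
  have hzero : v (enc C 0) ∈ zeroC C := hv .zero _
  have hsucc a : v (enc C (a + 1)) ∈ succC C (v (enc C a)) := hv .succ fun _ => enc C a
  have hnum a : ∃ r, v (enc C a) = .num r := by
    induction a with
    | zero => rcases hzero with h | h <;> exact ⟨_, h⟩
    | succ a ih =>
      obtain ⟨r, hr⟩ := ih
      have h := hsucc a
      rw [hr] at h
      obtain ⟨r', -, hr'⟩ := h
      exact ⟨r', hr'.symm⟩
  choose f hf using hnum
  refine ⟨f, ⟨?_, fun a => ?_⟩, hf⟩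
  · simpa [hf] using hzero
  · simpa [hf] using hsucc a

lemma compList_succ {k : ℕ} {cfg : Config C} (h : steps C (k + 1) = some cfg) :
    compList C (k + 1) = compList C k ++ [cfg] := by
  simp only [compList, List.range_succ, List.filterMap_append]
  simp [h]

lemma seqFm_append_singleton (l : List (Config C)) (cfg : Config C) :
    seqFm C (l ++ [cfg]) =
      .app (.step cfg.1) (Fin.cons (seqFm C l) (fun i => enc C (cfg.2 i))) := by
  simp [seqFm, seqRev]

lemma val_seqFm_compList (hv : IsVal (CMmatrix C) v) {f : ℕ → CMNum} (hf : IsAbstraction f)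
    (hvf : ∀ a, v (enc C a) = .num (f a)) :
    ∀ {k : ℕ} {cfg : Config C}, steps C k = some cfg →
      v (seqFm C (compList C k)) = .conf cfg.1 (f ∘ cfg.2) := by
  intro k
  induction k with
  | zero =>
    rintro cfg ⟨⟩
    have hinit : v (seqRev C []) = .init := hv .eps _
    refine eq_conf_of_mem_stepC (step_mem_of_isVal hv _ _ _) (fun _ => hvf 0) ?_
    rw [hinit, stepOK_init_iff]
    rcases hf.1 with h0 | h0
    exacts [⟨rfl, Or.inl fun _ => h0⟩, ⟨rfl, Or.inr fun _ => h0⟩]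
  | succ k ih =>
    intro cfg' hk'
    obtain ⟨cfg, hk, hnext⟩ := Option.bind_eq_some_iff.1 hk'
    rw [compList_succ hk', seqFm_append_singleton]
    refine eq_conf_of_mem_stepC (step_mem_of_isVal hv _ _ _) (fun i => hvf _) ?_
    rw [ih hk]
    exact stepOK_of_nextConf_eq_some hf hnext

end Valuation

def decodeNumeral : Fm (CMSig C) → Option ℕ
  | .app .zero _ => some 0
  | .app .succ args => (decodeNumeral (args ⟨0, Nat.one_pos⟩)).map (· + 1)
  | _ => none

noncomputable def absVal (f : ℕ → CMNum) : Fm (CMSig C) → CMVal C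
  | .var _ => .error
  | .app .zero _ => .num (f 0)
  | .app .eps _ => .init
  | .app .succ args =>
    match decodeNumeral (args ⟨0, Nat.one_pos⟩) with
    | some k => .num (f (k + 1))
    | none => .error
  | .app (.step q) args =>
    (stepC_nonempty C q (absVal f (args ⟨0, Nat.succ_pos _⟩))
      (fun i => absVal f (args i.succ))).some

section absVal

variable {f : ℕ → CMNum}

lemma absVal_step_mem (q : C.Q) (args : Fin (C.n + 1) → Fm (CMSig C)) :
    absVal f (.app (.step q) args) ∈
      stepC C q (absVal f (args 0)) (fun i => absVal f (args i.succ)) :=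
  Set.Nonempty.some_mem _

lemma absVal_of_decodeNumeral {A : Fm (CMSig C)} {k : ℕ} (hA : decodeNumeral A = some k) :
    absVal f A = .num (f k) := by
  match A with
  | .app .zero _ => cases hA; rfl
  | .app .succ args =>
    obtain ⟨k, hk, rfl⟩ := Option.map_eq_some_iff.1 hA
    simp [absVal, hk]

lemma decodeNumeral_isSome_of_absVal_eq_num {A : Fm (CMSig C)} {r : CMNum}
    (hA : absVal f A = .num r) : (decodeNumeral A).isSome := by
  match A with
  | .var _ => cases hA
  | .app .zero _ => rfl
  | .app .eps _ => cases hA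
  | .app .succ args =>
    simp only [absVal] at hA
    split at hA
    · simp_all [decodeNumeral]
    · cases hA
  | .app (.step q) args =>
    rcases eq_error_or_conf_of_mem_stepC (absVal_step_mem q args) with h | ⟨_, h⟩ <;>
      cases h.symm.trans hA

lemma absVal_eq_init_iff {A : Fm (CMSig C)} : absVal f A = .init ↔ ∃ args, A = .app .eps args := by
  refine ⟨fun hA => ?_, fun ⟨args, hA⟩ => hA ▸ rfl⟩
  match A with
  | .var _ => cases hA
  | .app .zero _ => cases hA
  | .app .eps args => exact ⟨args, rfl⟩
  | .app .succ args =>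
    simp only [absVal] at hA
    split at hA <;> cases hA
  | .app (.step q) args =>
    rcases eq_error_or_conf_of_mem_stepC (absVal_step_mem q args) with h | ⟨_, h⟩ <;>
      cases h.symm.trans hA

lemma exists_eq_step_of_absVal_eq_conf {A : Fm (CMSig C)} {q : C.Q} {zn : Fin C.n → CMNum}
    (hA : absVal f A = .conf q zn) : ∃ args, A = .app (.step q) args := by
  match A with
  | .var _ => cases hA
  | .app .zero _ => cases hA
  | .app .eps _ => cases hA
  | .app .succ args =>
    simp only [absVal] at hA
    split at hA <;> cases hA
  | .app (.step q') args =>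
    obtain ⟨rfl, -⟩ := conf_mem_stepC_iff.1 (hA ▸ absVal_step_mem q' args)
    exact ⟨args, rfl⟩

lemma isVal_absVal (hf : IsAbstraction f) : IsVal (CMmatrix C) (absVal f) := by
  intro c args
  cases c with
  | zero =>
    show absVal f _ ∈ zeroC C
    simpa [absVal] using hf.1
  | eps => rfl
  | succ =>
    show absVal f _ ∈ succC C (absVal f (args ⟨0, Nat.one_pos⟩))
    cases hk : decodeNumeral (args ⟨0, Nat.one_pos⟩) with
    | some k => simpa [absVal, hk, absVal_of_decodeNumeral hk] using hf.2 k
    | none =>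
      simp only [absVal, hk]
      cases hx : absVal f (args ⟨0, Nat.one_pos⟩) with
      | num r => simpa [hk] using decodeNumeral_isSome_of_absVal_eq_num hx
      | _ => rfl
  | step q => exact absVal_step_mem q args

end absVal

def Denotes (A : Fm (CMSig C)) (cfg : Config C) : Prop :=
  ∀ f, IsAbstraction f → absVal f A = .conf cfg.1 (f ∘ cfg.2)

/-- The premise of `step^q` is either `ε`, which forces the initial configuration, or denotes a
reachable configuration, from which `nextConf` leads to the configuration denoted here. -/
lemma exists_steps_denotes_app_step {q : C.Q} {args : Fin (C.n + 1) → Fm (CMSig C)}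
    (ih : (∀ f, IsAbstraction f → ∃ q' yn, absVal f (args 0) = .conf q' yn) →
      ∃ k cfg, steps C k = some cfg ∧ Denotes (args 0) cfg)
    (hA : ∀ f, IsAbstraction f → ∃ q' zn, absVal f (.app (.step q) args) = .conf q' zn) :
    ∃ k cfg, steps C k = some cfg ∧ Denotes (.app (.step q) args) cfg := by
  have hval f (hf : IsAbstraction f) :
      ∃ zn, absVal f (.app (.step q) args) = .conf q zn ∧
        (∀ i, absVal f (args i.succ) = .num (zn i)) ∧ stepOK C q (absVal f (args 0)) zn := by
    obtain ⟨q', zn, h⟩ := hA f hf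
    obtain ⟨rfl, hnum, hok⟩ := conf_mem_stepC_iff.1 (h ▸ absVal_step_mem q args)
    exact ⟨zn, h, hnum, hok⟩
  choose zn hzn hnum hok using hval
  have hheight (i : Fin C.n) : ∃ k, decodeNumeral (args i.succ) = some k :=
    Option.isSome_iff_exists.1
      (decodeNumeral_isSome_of_absVal_eq_num (hnum exactAbs isAbstraction_exactAbs i))
  choose b hb using hheight
  have hznb f hf : zn f hf = f ∘ b := funext fun i =>
    CMVal.num.inj ((hnum f hf i).symm.trans (absVal_of_decodeNumeral (hb i)))
  simp only [hznb] at hzn hok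
  suffices ∃ k, steps C k = some (q, b) from
    let ⟨k, hk⟩ := this; ⟨k, (q, b), hk, hzn⟩
  by_cases hx : ∃ args', args 0 = .app .eps args'
  · have hinit f : absVal f (args 0) = .init := absVal_eq_init_iff.2 hx
    simp only [hinit] at hok
    obtain ⟨rfl, rfl⟩ := forall_stepOK_init_iff.1 hok
    exact ⟨0, rfl⟩
  · have hconf f (hf : IsAbstraction f) : ∃ q' yn, absVal f (args 0) = .conf q' yn := by
      rcases hok f hf with ⟨hinit, -⟩ | ⟨q', yn, h, -⟩
      · exact absurd (absVal_eq_init_iff.1 hinit) hx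
      · exact ⟨q', yn, h⟩
    obtain ⟨k, ⟨q', a⟩, hk, hxa⟩ := ih hconf
    refine ⟨k + 1, Option.bind_eq_some_iff.2 ⟨(q', a), hk, ?_⟩⟩
    exact nextConf_eq_some_of_forall_stepOK fun f hf => hxa f hf ▸ hok f hf

theorem exists_steps_denotes_of_forall_absVal_eq_conf (A : Fm (CMSig C))
    (hA : ∀ f, IsAbstraction f → ∃ q zn, absVal f A = .conf q zn) :
    ∃ k cfg, steps C k = some cfg ∧ Denotes A cfg := by
  induction A with
  | var => obtain ⟨_, _, h⟩ := hA exactAbs isAbstraction_exactAbs; cases h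
  | app c args ih =>
    obtain ⟨q, _, hexact⟩ := hA exactAbs isAbstraction_exactAbs
    obtain ⟨args, ⟨⟩⟩ := exists_eq_step_of_absVal_eq_conf hexact
    exact exists_steps_denotes_app_step (ih ⟨0, Nat.succ_pos _⟩) hA

end CounterMachine

/-- A counter machine C halts from all counters zero if and only if the logic of
the induced Nmatrix ℂ has some theorem. -/
theorem stmt_8 (C : CounterMachine) :
    (∃ (k : ℕ) (cfg : Config C), steps C k = some cfg ∧ Halting C cfg) ↔
      ∃ A : Fm (CMSig C), Entails (CMmatrix C) ∅ A := by
  open CounterMachine CMNum in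
  constructor
  · rintro ⟨k, cfg, hk, hhalt⟩
    refine ⟨seqFm C (compList C k), fun v hv _ => ?_⟩
    obtain ⟨f, hf, hvf⟩ := exists_isAbstraction_of_isVal hv
    rw [val_seqFm_compList hv hf hvf hk]
    exact ⟨cfg.1, _, rfl, hhalt⟩
  · rintro ⟨A, hA⟩
    have hD f (hf : IsAbstraction f) : absVal f A ∈ (CMmatrix C).D :=
      hA _ (isVal_absVal hf) (by simp)
    obtain ⟨k, cfg, hk, hcfg⟩ := exists_steps_denotes_of_forall_absVal_eq_conf A fun f hf =>
      let ⟨q, zn, h, _⟩ := hD f hf; ⟨q, zn, h⟩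
    obtain ⟨q, zn, h, hhalt⟩ := hD exactAbs isAbstraction_exactAbs
    rw [hcfg exactAbs isAbstraction_exactAbs] at h
    cases h
    exact ⟨k, cfg, hk, hhalt⟩
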